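/- Let n ≥ 2, let x_1 < ⋯ < x_n be real and m_1, …, m_n > 0, set l_k = x_{k+1} − x_k, and for 0 ≤ k ≤ n−1 let a^{(2k+1)}(z) = G_n(z) L_{n−1} G_{n−1}(z) ⋯ G_{n−k+1}(z) L_{n−k} G_{n−k}(z), where L_j = [[1, l_j, l_j²/2],[0,1,l_j],[0,0,1]] and G_j(z) = [[1,0,0],[0,1,0],[−2 m_j z,0,1]]. For k = 0: a^{(1)}_{31}(z) = −2 m_n z, a^{(1)}_{32}(z) = 0, a^{(1)}_{33}(z) = 1. For 1 ≤ k ≤ n−1: (i) a^{(2k+1)}_{31} has zero constant term, coefficient of z equal to −2 Σ_{i=n−k}^{n} m_i, and leading term (−2z)^{k+1} (∏_{i=n+1−k}^{n} m_i l_{i−1}²/2) m_{n−k} of degree k+1; (ii) a^{(2k+1)}_{32} has zero constant term, coefficient of z equal to −2 Σ_{i=n+1−k}^{n} m_i (x_i − x_{n−k}), and leading term (−2z)^{k} (∏_{i=n+2−k}^{n} m_i l_{i−1}²/2) m_{n+1−k} l_{n−k} of degree k; (iii) a^{(2k+1)}_{33} has constant term 1, coefficient of z equal to −Σ_{i=n+1−k}^{n}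 m_i (x_i − x_{n−k})², and leading term (−2z)^{k} ∏_{i=n+1−k}^{n} m_i l_{i−1}²/2 of degree k. -/

import Mathlib

/-!
Only the third row `(A, B, C)` of `a^{(2k+1)}` matters, and right multiplication by `L_l G_μ`
updates it by `C' = A l²/2 + B l + C`, `B' = A l + B`, `A' = A - 2μ z C'`. Induction on `k` gives
the degree bounds `deg A ≤ k + 1`, `deg B, deg C ≤ k`, along which each new top coefficient is a
multiple of the previous top coefficient of `A`; nonzero masses and gaps make these bounds sharp.
The coefficients of `z` are the moments `∑ m_i (x_i - x_p)^j`, `j = 0, 1, 2`, and the update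
moves their base point from `x_{p+1}` to `x_p` by the binomial shift identity.
-/

open Polynomial Matrix

/-- The transfer matrix `L_k` of the discrete cubic string (with gap `l`). -/
noncomputable def Lmat (l : ℝ) : Matrix (Fin 3) (Fin 3) (Polynomial ℝ) :=
  !![1, Polynomial.C l, Polynomial.C (l ^ 2 / 2);
     0, 1, Polynomial.C l;
     0, 0, 1]

/-- The transfer matrix `G_k(z)` of the discrete cubic string (with mass `m`). -/
noncomputable def Gmat (m : ℝ) : Matrix (Fin 3) (Fin 3) (Polynomial ℝ) :=
  !![1, 0, 0;
     0, 1, 0;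
     Polynomial.C (-2 * m) * Polynomial.X, 0, 1]

/-- The transition matrix `S(z) = G_n(z) L_{n−1} G_{n−1}(z) ⋯ L_1 G_1(z)` of the
discrete cubic string with masses `m 1, …, m n` and gaps `l 1, …, l (n−1)`. -/
noncomputable def transMat (m l : ℕ → ℝ) : ℕ → Matrix (Fin 3) (Fin 3) (Polynomial ℝ)
  | 0 => 1
  | 1 => Gmat (m 1)
  | (k + 2) => Gmat (m (k + 2)) * Lmat (l (k + 1)) * transMat m l (k + 1)

/-- `aMat m l n k` is `a^{(2k+1)}(z) = G_n(z) L_{n−1} G_{n−1}(z) ⋯ L_{n−k} G_{n−k}(z)`,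
the product of the leftmost `2k+1` factors of the transition matrix. -/
noncomputable def aMat (m l : ℕ → ℝ) (n : ℕ) : ℕ → Matrix (Fin 3) (Fin 3) (Polynomial ℝ)
  | 0 => Gmat (m n)
  | (k + 1) => aMat m l n k * Lmat (l (n - (k + 1))) * Gmat (m (n - (k + 1)))

namespace Finset

lemma sum_Icc_add_one_left_of_eq_zero {M : Type*} [AddCommMonoid M] {f : ℕ → M} {a b : ℕ}
    (ha : f a = 0) : ∑ i ∈ Icc (a + 1) b, f i = ∑ i ∈ Icc a b, f i := by
  refine sum_subset (Icc_subset_Icc_left (Nat.le_succ a)) fun i hi hi' => ?_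
  obtain rfl : i = a := by simp only [mem_Icc] at hi hi'; omega
  exact ha

variable {ι R : Type*} [CommRing R] (s : Finset ι) (w y : ι → R) (a b : R)

lemma sum_mul_sub_eq_add : ∑ i ∈ s, w i * (y i - a)
    = ∑ i ∈ s, w i * (y i - b) + (b - a) * ∑ i ∈ s, w i := by
  rw [mul_sum, ← sum_add_distrib]
  exact sum_congr rfl fun _ _ => by ring

lemma sum_mul_sub_sq_eq_add : ∑ i ∈ s, w i * (y i - a) ^ 2
    = ∑ i ∈ s, w i * (y i - b) ^ 2 + 2 * (b - a) * ∑ i ∈ s, w i * (y i - b)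
      + (b - a) ^ 2 * ∑ i ∈ s, w i := by
  rw [mul_sum, mul_sum, ← sum_add_distrib, ← sum_add_distrib]
  exact sum_congr rfl fun _ _ => by ring

end Finset

open Finset

section ThirdRow

variable (m l : ℕ → ℝ) (n : ℕ)

lemma aMat_zero_two_zero : aMat m l n 0 2 0 = C (-2 * m n) * X := by simp [aMat, Gmat]

lemma aMat_zero_two_one : aMat m l n 0 2 1 = 0 := by simp [aMat, Gmat]

lemma aMat_zero_two_two : aMat m l n 0 2 2 = 1 := by simp [aMat, Gmat]

lemma aMat_succ_two_two (k : ℕ) : aMat m l n (k + 1) 2 2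
    = aMat m l n k 2 0 * C (l (n - (k + 1)) ^ 2 / 2) + aMat m l n k 2 1 * C (l (n - (k + 1)))
      + aMat m l n k 2 2 := by
  simp [aMat, Lmat, Gmat, mul_apply, Fin.sum_univ_three]

lemma aMat_succ_two_one (k : ℕ) : aMat m l n (k + 1) 2 1
    = aMat m l n k 2 0 * C (l (n - (k + 1))) + aMat m l n k 2 1 := by
  simp [aMat, Lmat, Gmat, mul_apply, Fin.sum_univ_three]

lemma aMat_succ_two_zero (k : ℕ) : aMat m l n (k + 1) 2 0
    = aMat m l n k 2 0 + aMat m l n (k + 1) 2 2 * C (-2 * m (n - (k + 1))) * X := by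
  rw [aMat_succ_two_two]
  simp [aMat, Lmat, Gmat, mul_apply, Fin.sum_univ_three]
  ring

lemma natDegree_aMat_two_le (k : ℕ) : (aMat m l n k 2 0).natDegree ≤ k + 1 ∧
    (aMat m l n k 2 1).natDegree ≤ k ∧ (aMat m l n k 2 2).natDegree ≤ k := by
  induction k with
  | zero =>
    simp only [aMat_zero_two_zero, aMat_zero_two_one, aMat_zero_two_two, natDegree_zero,
      natDegree_one, le_refl, and_true]
    exact natDegree_le_of_degree_le (degree_C_mul_X_le _)
  | succ k ih =>
    obtain ⟨hA, hB, hC⟩ := ih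
    have hC' : (aMat m l n (k + 1) 2 2).natDegree ≤ k + 1 := by
      rw [aMat_succ_two_two]
      refine natDegree_add_le_of_degree_le (natDegree_add_le_of_degree_le ?_ ?_) (by omega)
      · exact (natDegree_mul_C_le _ _).trans hA
      · exact (natDegree_mul_C_le _ _).trans (by omega)
    refine ⟨?_, ?_, hC'⟩
    · rw [aMat_succ_two_zero]
      refine natDegree_add_le_of_degree_le (by omega) (natDegree_mul_le.trans ?_)
      exact add_le_add ((natDegree_mul_C_le _ _).trans hC') natDegree_X_le
    · rw [aMat_succ_two_one]
      exact natDegree_add_le_of_degree_le ((natDegree_mul_C_le _ _).trans hA) (by omega)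

lemma coeff_aMat_two_zero_succ (k : ℕ) :
    (aMat m l n k 2 0).coeff (k + 1) = (aMat m l n k 2 2).coeff k * (-2 * m (n - k)) := by
  cases k with
  | zero => simp [aMat_zero_two_zero, aMat_zero_two_two]
  | succ k =>
    have hA := (natDegree_aMat_two_le m l n k).1
    rw [aMat_succ_two_zero, coeff_add, coeff_mul_X, coeff_mul_C,
      coeff_eq_zero_of_natDegree_lt (by omega), zero_add]

lemma coeff_aMat_succ_two_two_succ (k : ℕ) : (aMat m l n (k + 1) 2 2).coeff (k + 1)
    = (aMat m l n k 2 0).coeff (k + 1) * (l (n - (k + 1)) ^ 2 / 2) := by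
  obtain ⟨-, hB, hC⟩ := natDegree_aMat_two_le m l n k
  rw [aMat_succ_two_two, coeff_add, coeff_add, coeff_mul_C, coeff_mul_C,
    coeff_eq_zero_of_natDegree_lt (p := aMat m l n k 2 1) (by omega),
    coeff_eq_zero_of_natDegree_lt (p := aMat m l n k 2 2) (by omega)]
  ring

lemma coeff_aMat_succ_two_one_succ (k : ℕ) : (aMat m l n (k + 1) 2 1).coeff (k + 1)
    = (aMat m l n k 2 0).coeff (k + 1) * l (n - (k + 1)) := by
  have hB := (natDegree_aMat_two_le m l n k).2.1
  rw [aMat_succ_two_one, coeff_add, coeff_mul_C,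
    coeff_eq_zero_of_natDegree_lt (p := aMat m l n k 2 1) (by omega), add_zero]

lemma coeff_aMat_two_two_self_eq_prod {k : ℕ} (hk : k ≤ n) : (aMat m l n k 2 2).coeff k
    = (-2) ^ k * ∏ i ∈ Icc (n + 1 - k) n, m i * l (i - 1) ^ 2 / 2 := by
  induction k with
  | zero => simp [aMat_zero_two_two]
  | succ k ih =>
    have hsplit : ∏ i ∈ Icc (n - k) n, m i * l (i - 1) ^ 2 / 2
        = m (n - k) * l (n - (k + 1)) ^ 2 / 2
          * ∏ i ∈ Icc (n + 1 - k) n, m i * l (i - 1) ^ 2 / 2 := by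
      rw [← insert_Icc_add_one_left_eq_Icc (by omega : n - k ≤ n), prod_insert (by simp),
        show n - k + 1 = n + 1 - k by omega, show n - k - 1 = n - (k + 1) by omega]
    rw [coeff_aMat_succ_two_two_succ, coeff_aMat_two_zero_succ, ih (by omega),
      Nat.add_sub_add_right, hsplit]
    ring

lemma coeff_aMat_two_zero_succ_eq_prod {k : ℕ} (hk : k ≤ n) : (aMat m l n k 2 0).coeff (k + 1)
    = (-2) ^ (k + 1) * (∏ i ∈ Icc (n + 1 - k) n, m i * l (i - 1) ^ 2 / 2) * m (n - k) := by
  rw [coeff_aMat_two_zero_succ, coeff_aMat_two_two_self_eq_prod m l n hk]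
  ring

lemma coeff_aMat_two_one_self_eq_prod {k : ℕ} (hk₁ : 1 ≤ k) (hk : k ≤ n) :
    (aMat m l n k 2 1).coeff k = (-2) ^ k * (∏ i ∈ Icc (n + 2 - k) n, m i * l (i - 1) ^ 2 / 2)
      * (m (n + 1 - k) * l (n - k)) := by
  obtain ⟨j, rfl⟩ := Nat.exists_eq_add_of_le' hk₁
  rw [coeff_aMat_succ_two_one_succ, coeff_aMat_two_zero_succ_eq_prod m l n (by omega),
    show n + 2 - (j + 1) = n + 1 - j by omega, Nat.add_sub_add_right]
  ring

lemma coeff_zero_aMat_two (k : ℕ) : (aMat m l n k 2 0).coeff 0 = 0 ∧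
    (aMat m l n k 2 1).coeff 0 = 0 ∧ (aMat m l n k 2 2).coeff 0 = 1 := by
  induction k with
  | zero => simp [aMat_zero_two_zero, aMat_zero_two_one, aMat_zero_two_two]
  | succ k ih =>
    obtain ⟨hA, hB, hC⟩ := ih
    refine ⟨?_, ?_, ?_⟩
    · rw [aMat_succ_two_zero, coeff_add, coeff_mul_X_zero, hA, add_zero]
    · rw [aMat_succ_two_one, coeff_add, coeff_mul_C, hA, hB]; ring
    · rw [aMat_succ_two_two, coeff_add, coeff_add, coeff_mul_C, coeff_mul_C, hA, hB, hC]; ring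

lemma coeff_one_aMat_two (x : ℕ → ℝ) (hl : ∀ j, l j = x (j + 1) - x j) {k : ℕ}
    (hk : k ≤ n) :
    (aMat m l n k 2 0).coeff 1 = -2 * ∑ i ∈ Icc (n - k) n, m i ∧
    (aMat m l n k 2 1).coeff 1 = -2 * ∑ i ∈ Icc (n + 1 - k) n, m i * (x i - x (n - k)) ∧
    (aMat m l n k 2 2).coeff 1 = -∑ i ∈ Icc (n + 1 - k) n, m i * (x i - x (n - k)) ^ 2 := by
  induction k with
  | zero => simp [aMat_zero_two_zero, aMat_zero_two_one, aMat_zero_two_two, coeff_one]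
  | succ k ih =>
    obtain ⟨hA, hB, hC⟩ := ih (by omega)
    have hC0 := (coeff_zero_aMat_two m l n (k + 1)).2.2
    rw [Nat.add_sub_add_right]
    rw [show n - k = n - (k + 1) + 1 by omega] at hA hB hC ⊢
    rw [show n + 1 - k = n - (k + 1) + 1 + 1 by omega] at hB hC
    set p := n - (k + 1)
    rw [sum_Icc_add_one_left_of_eq_zero (f := fun i => m i * (x i - x (p + 1))) (by simp)] at hB
    rw [sum_Icc_add_one_left_of_eq_zero (f := fun i => m i * (x i - x (p + 1)) ^ 2) (by simp)]
      at hC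
    refine ⟨?_, ?_, ?_⟩
    · rw [aMat_succ_two_zero, coeff_add, coeff_mul_X _ 0, coeff_mul_C, hA, hC0,
        ← insert_Icc_add_one_left_eq_Icc (by omega : p ≤ n), sum_insert (by simp)]
      ring
    · rw [aMat_succ_two_one, coeff_add, coeff_mul_C, hA, hB, hl p,
        sum_mul_sub_eq_add _ _ _ (x p) (x (p + 1))]
      ring
    · rw [aMat_succ_two_two, coeff_add, coeff_add, coeff_mul_C, coeff_mul_C, hA, hB, hC, hl p,
        sum_mul_sub_sq_eq_add _ _ _ (x p) (x (p + 1))]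
      ring

end ThirdRow

lemma prod_Icc_mass_gap_ne_zero {m l : ℕ → ℝ} {n q : ℕ}
    (hm : ∀ i, 1 ≤ i → i ≤ n → m i ≠ 0) (hl : ∀ i, 1 ≤ i → i < n → l i ≠ 0)
    (hq : 2 ≤ q) : ∏ i ∈ Icc q n, m i * l (i - 1) ^ 2 / 2 ≠ 0 := by
  refine prod_ne_zero_iff.2 fun i hi => ?_
  rw [mem_Icc] at hi
  have := hm i (by omega) hi.2
  have := hl (i - 1) (by omega) (by omega)
  positivity

section Nondegenerate

variable {m l : ℕ → ℝ} {n k : ℕ}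

lemma natDegree_aMat_two_zero (hm : ∀ i, 1 ≤ i → i ≤ n → m i ≠ 0)
    (hl : ∀ i, 1 ≤ i → i < n → l i ≠ 0) (hk : k < n) :
    (aMat m l n k 2 0).natDegree = k + 1 := by
  refine natDegree_eq_of_le_of_coeff_ne_zero (natDegree_aMat_two_le m l n k).1 ?_
  rw [coeff_aMat_two_zero_succ_eq_prod m l n hk.le]
  have := prod_Icc_mass_gap_ne_zero hm hl (q := n + 1 - k) (by omega)
  have := hm (n - k) (by omega) (by omega)
  positivity

lemma natDegree_aMat_two_one (hm : ∀ i, 1 ≤ i → i ≤ n → m i ≠ 0)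
    (hl : ∀ i, 1 ≤ i → i < n → l i ≠ 0) (hk₁ : 1 ≤ k) (hk : k < n) :
    (aMat m l n k 2 1).natDegree = k := by
  refine natDegree_eq_of_le_of_coeff_ne_zero (natDegree_aMat_two_le m l n k).2.1 ?_
  rw [coeff_aMat_two_one_self_eq_prod m l n hk₁ hk.le]
  have := prod_Icc_mass_gap_ne_zero hm hl (q := n + 2 - k) (by omega)
  have := hm (n + 1 - k) (by omega) (by omega)
  have := hl (n - k) (by omega) (by omega)
  positivity

lemma natDegree_aMat_two_two (hm : ∀ i, 1 ≤ i → i ≤ n → m i ≠ 0)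
    (hl : ∀ i, 1 ≤ i → i < n → l i ≠ 0) (hk : k < n) :
    (aMat m l n k 2 2).natDegree = k := by
  refine natDegree_eq_of_le_of_coeff_ne_zero (natDegree_aMat_two_le m l n k).2.2 ?_
  rw [coeff_aMat_two_two_self_eq_prod m l n hk.le]
  have := prod_Icc_mass_gap_ne_zero hm hl (q := n + 1 - k) (by omega)
  positivity

end Nondegenerate

theorem stmt10_general (n : ℕ) (x m : ℕ → ℝ)
    (hx : ∀ i, 1 ≤ i → i < n → x i < x (i + 1))
    (hm : ∀ i, 1 ≤ i → i ≤ n → 0 < m i)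
    (l : ℕ → ℝ) (hl : ∀ k, l k = x (k + 1) - x k) :
    (aMat m l n 0 2 0 = Polynomial.C (-2 * m n) * Polynomial.X ∧
     aMat m l n 0 2 1 = 0 ∧
     aMat m l n 0 2 2 = 1) ∧
    (∀ k, 1 ≤ k → k ≤ n - 1 →
      ((aMat m l n k 2 0).coeff 0 = 0 ∧
       (aMat m l n k 2 0).coeff 1 = -2 * ∑ i ∈ Finset.Icc (n - k) n, m i ∧
       (aMat m l n k 2 0).natDegree = k + 1 ∧
       (aMat m l n k 2 0).coeff (k + 1)
         = (-2) ^ (k + 1) * (∏ i ∈ Finset.Icc (n + 1 - k) n, m i * l (i - 1) ^ 2 / 2)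
             * m (n - k)) ∧
      ((aMat m l n k 2 1).coeff 0 = 0 ∧
       (aMat m l n k 2 1).coeff 1
         = -2 * ∑ i ∈ Finset.Icc (n + 1 - k) n, m i * (x i - x (n - k)) ∧
       (aMat m l n k 2 1).natDegree = k ∧
       (aMat m l n k 2 1).coeff k
         = (-2) ^ k * (∏ i ∈ Finset.Icc (n + 2 - k) n, m i * l (i - 1) ^ 2 / 2)
             * (m (n + 1 - k) * l (n - k))) ∧
      ((aMat m l n k 2 2).coeff 0 = 1 ∧
       (aMat m l n k 2 2).coeff 1
         = -∑ i ∈ Finset.Icc (n + 1 - k) n, m i * (x i - x (n - k)) ^ 2 ∧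
       (aMat m l n k 2 2).natDegree = k ∧
       (aMat m l n k 2 2).coeff k
         = (-2) ^ k * ∏ i ∈ Finset.Icc (n + 1 - k) n, m i * l (i - 1) ^ 2 / 2)) := by
  have hm' : ∀ i, 1 ≤ i → i ≤ n → m i ≠ 0 := fun i h₁ h₂ => (hm i h₁ h₂).ne'
  have hl' : ∀ i, 1 ≤ i → i < n → l i ≠ 0 := fun i h₁ h₂ => by
    rw [hl]
    exact sub_ne_zero.2 (hx i h₁ h₂).ne'
  refine ⟨⟨aMat_zero_two_zero m l n, aMat_zero_two_one m l n, aMat_zero_two_two m l n⟩,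
    fun k hk₁ hk => ?_⟩
  have hkn : k < n := by omega
  obtain ⟨hA₀, hB₀, hC₀⟩ := coeff_zero_aMat_two m l n k
  obtain ⟨hA₁, hB₁, hC₁⟩ := coeff_one_aMat_two m l n x hl hkn.le
  exact ⟨⟨hA₀, hA₁, natDegree_aMat_two_zero hm' hl' hkn,
      coeff_aMat_two_zero_succ_eq_prod m l n hkn.le⟩,
    ⟨hB₀, hB₁, natDegree_aMat_two_one hm' hl' hk₁ hkn,
      coeff_aMat_two_one_self_eq_prod m l n hk₁ hkn.le⟩,
    ⟨hC₀, hC₁, natDegree_aMat_two_two hm' hl' hkn,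
      coeff_aMat_two_two_self_eq_prod m l n hkn.le⟩⟩

/-- **Explicit lowest and highest coefficients of the third row of `a^{(2k+1)}(z)`.**
For `k = 0`: `a^{(1)}_{31} = −2 m_n z`, `a^{(1)}_{32} = 0`, `a^{(1)}_{33} = 1`.
For `1 ≤ k ≤ n−1`, with `l_j = x_{j+1} − x_j`:
`a^{(2k+1)}_{31}` has zero constant term, `z`-coefficient `−2 Σ_{i=n−k}^n m_i` and
leading term `(−2z)^{k+1}(∏_{i=n+1−k}^n m_i l_{i−1}²/2) m_{n−k}` of degree `k+1`;
`a^{(2k+1)}_{32}` has zero constant term, `z`-coefficient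
`−2 Σ_{i=n+1−k}^n m_i (x_i − x_{n−k})` and leading term
`(−2z)^k (∏_{i=n+2−k}^n m_i l_{i−1}²/2) m_{n+1−k} l_{n−k}` of degree `k`;
`a^{(2k+1)}_{33}` has constant term `1`, `z`-coefficient
`−Σ_{i=n+1−k}^n m_i (x_i − x_{n−k})²` and leading term
`(−2z)^k ∏_{i=n+1−k}^n m_i l_{i−1}²/2` of degree `k`.
(Matrix indices are 0-based.) -/
theorem stmt10 (n : ℕ) (hn : 2 ≤ n) (x m : ℕ → ℝ)
    (hx : ∀ i, 1 ≤ i → i < n → x i < x (i + 1))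
    (hm : ∀ i, 1 ≤ i → i ≤ n → 0 < m i)
    (l : ℕ → ℝ) (hl : ∀ k, l k = x (k + 1) - x k) :
    (aMat m l n 0 2 0 = Polynomial.C (-2 * m n) * Polynomial.X ∧
     aMat m l n 0 2 1 = 0 ∧
     aMat m l n 0 2 2 = 1) ∧
    (∀ k, 1 ≤ k → k ≤ n - 1 →
      ((aMat m l n k 2 0).coeff 0 = 0 ∧
       (aMat m l n k 2 0).coeff 1 = -2 * ∑ i ∈ Finset.Icc (n - k) n, m i ∧
       (aMat m l n k 2 0).natDegree = k + 1 ∧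
       (aMat m l n k 2 0).coeff (k + 1)
         = (-2) ^ (k + 1) * (∏ i ∈ Finset.Icc (n + 1 - k) n, m i * l (i - 1) ^ 2 / 2)
             * m (n - k)) ∧
      ((aMat m l n k 2 1).coeff 0 = 0 ∧
       (aMat m l n k 2 1).coeff 1
         = -2 * ∑ i ∈ Finset.Icc (n + 1 - k) n, m i * (x i - x (n - k)) ∧
       (aMat m l n k 2 1).natDegree = k ∧
       (aMat m l n k 2 1).coeff k
         = (-2) ^ k * (∏ i ∈ Finset.Icc (n + 2 - k) n, m i * l (i - 1) ^ 2 / 2)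
             * (m (n + 1 - k) * l (n - k))) ∧
      ((aMat m l n k 2 2).coeff 0 = 1 ∧
       (aMat m l n k 2 2).coeff 1
         = -∑ i ∈ Finset.Icc (n + 1 - k) n, m i * (x i - x (n - k)) ^ 2 ∧
       (aMat m l n k 2 2).natDegree = k ∧
       (aMat m l n k 2 2).coeff k
         = (-2) ^ k * ∏ i ∈ Finset.Icc (n + 1 - k) n, m i * l (i - 1) ^ 2 / 2)) :=
  stmt10_general n x m hx hm l hl
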